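/- If G belongs to G_k (i.e., CUT(G) is defined by valid inequalities supported by at most k points), then kappa(G) <= kappa(K_k). -/

import Mathlib

open Finset Real
open scoped Classical Pointwise

noncomputable section

variable {V : Type*} [Fintype V] [LinearOrder V]

/-- Sum over the edges of `G` (pairs `i < j` with `G.Adj i j`) of `w i j * x i j`. -/
def edgeSum (G : SimpleGraph V) (w : V → V → ℝ) (x : V → V → ℝ) : ℝ :=
  ∑ i, ∑ j, if i < j ∧ G.Adj i j then w i j * x i j else 0

/-- `ip(G,w)`: maximum of `∑_{ij ∈ E} w_ij x_i x_j` over `x ∈ {±1}^V`. -/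
def ipVal (G : SimpleGraph V) (w : V → V → ℝ) : ℝ :=
  sSup {t | ∃ x : V → ℝ, (∀ i, x i = 1 ∨ x i = -1) ∧
    t = edgeSum G w (fun i j => x i * x j)}

/-- `sdp(G,w)`: maximum of `∑_{ij ∈ E} w_ij ⟪u_i,u_j⟫` over unit vectors. -/
def sdpVal (G : SimpleGraph V) (w : V → V → ℝ) : ℝ :=
  sSup {t | ∃ u : V → EuclideanSpace ℝ V, (∀ i, ‖u i‖ = 1) ∧
    t = edgeSum G w (fun i j => (inner ℝ (u i) (u j) : ℝ))}

/-- The Grothendieck constant `κ(G) = sup_w sdp(G,w)/ip(G,w)`. -/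
def kappaVal (G : SimpleGraph V) : ℝ :=
  sSup {t | ∃ w : V → V → ℝ, t = sdpVal G w / ipVal G w}

/-- The elliptope: PSD matrices with unit diagonal. -/
def elliptope (V : Type*) [Fintype V] : Set (Matrix V V ℝ) :=
  {X | X.PosSemidef ∧ ∀ i, X i i = 1}

/-- The cut polytope: convex hull of rank-one ±1 correlation matrices. -/
def cutPolytope (V : Type*) [Fintype V] : Set (Matrix V V ℝ) :=
  convexHull ℝ {X | ∃ x : V → ℝ, (∀ i, x i = 1 ∨ x i = -1) ∧
    X = Matrix.of fun i j => x i * x j}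

/-- Projection of a matrix onto the edge set of `G`. -/
def projE (G : SimpleGraph V) (X : Matrix V V ℝ) : V → V → ℝ :=
  fun i j => if G.Adj i j then X i j else 0

/-- `𝓔(G)`: projection of the elliptope onto the edge set of `G`. -/
def ellG (G : SimpleGraph V) : Set (V → V → ℝ) := projE G '' elliptope V

/-- `CUT(G)`: projection of the cut polytope onto the edge set of `G`. -/
def cutG (G : SimpleGraph V) : Set (V → V → ℝ) := projE G '' cutPolytope V

end

noncomputable section
variable {V : Type*} [Fintype V] [LinearOrder V]

/-- `wᵀX` over all pairs `i < j`. -/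
def edgeSumAll (w : V → V → ℝ) (X : Matrix V V ℝ) : ℝ :=
  ∑ i, ∑ j, if i < j then w i j * X i j else 0

/-- `wᵀx ≤ 1` is valid for the cut polytope. -/
def ValidIneq (w : V → V → ℝ) : Prop :=
  ∀ X ∈ cutPolytope V, edgeSumAll w X ≤ 1

/-- The vertex support of the inequality `w`. -/
def suppSet (w : V → V → ℝ) : Set V :=
  {i | ∃ j, (i < j ∧ w i j ≠ 0) ∨ (j < i ∧ w j i ≠ 0)}

/-- `𝓡_k`: points satisfying every valid inequality supported on `≤ k` vertices. -/
def Rk (V : Type*) [Fintype V] [LinearOrder V] (k : ℕ) : Set (Matrix V V ℝ) :=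
  {X | ∀ w : V → V → ℝ, ValidIneq w → (suppSet w).ncard ≤ k → edgeSumAll w X ≤ 1}

/-- `G ∈ 𝒢_k`: `CUT(G) = 𝓡_k(G)`. -/
def inGk (k : ℕ) (G : SimpleGraph V) : Prop :=
  cutG G = projE G '' Rk V k

end

/-!
For `t > κ(K_k)` and `X` the Gram matrix of unit vectors, every valid inequality `wᵀx ≤ 1` of
the cut polytope supported on at most `k` vertices satisfies `wᵀX ≤ κ(K_k) < t`: relabelling
its support by `Fin k` turns `w` into a weighting `w'` of `K_k` with `ip(K_k, w') ≤ 1`, and `X`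
into a point of the elliptope of `K_k`. Hence `X / t ∈ 𝓡_k`, and `G ∈ 𝒢_k` puts its projection
on the edges of `G` into `CUT(G)`, which gives `sdp(G, w) ≤ t · ip(G, w)` for every `w`, i.e.
`κ(G) ≤ t`.

That the suprema defining `κ` are finite rests on `|w_ab| ≤ ip(G, w)` for each edge `ab`: averaging
over random signs conditioned on `x_a x_b = sign w_ab` gives expected value `|w_ab|`.
-/

section Signs

variable {V : Type*}

def toSign (s : V → Bool) : V → ℝ := fun i => if s i then 1 else -1

theorem toSign_eq_one_or (s : V → Bool) (i : V) : toSign s i = 1 ∨ toSign s i = -1 := by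
  unfold toSign; split_ifs <;> simp

theorem toSign_mul_self (s : V → Bool) (i : V) : toSign s i * toSign s i = 1 := by
  rcases toSign_eq_one_or s i with h | h <;> simp [h]

theorem sum_toSign_mul_toSign [Fintype V] [DecidableEq V] (i j : V) :
    ∑ s : V → Bool, toSign s i * toSign s j =
      if i = j then (Fintype.card (V → Bool) : ℝ) else 0 := by
  split_ifs with hij
  · simp [hij, toSign_mul_self]
  -- flipping the `i`-th sign is a bijection that negates every summand
  let flip (s : V → Bool) : V → Bool := Function.update s i (!s i)
  have hflip : Function.Involutive flip := fun s => by
    ext l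
    by_cases hl : l = i <;> simp [flip, hl]
  have hneg : ∀ s, toSign (flip s) i * toSign (flip s) j = -(toSign s i * toSign s j) := by
    intro s
    simp only [flip, toSign, Function.update_self, Function.update_of_ne (Ne.symm hij)]
    cases s i <;> cases s j <;> norm_num
  have := Fintype.sum_bijective flip hflip.bijective (fun s => -(toSign s i * toSign s j))
    (fun s => toSign s i * toSign s j) fun s => (hneg s).symm
  rw [sum_neg_distrib] at this
  linarith

theorem exists_sign_extend {W : Type*} {ψ : W → V} {S : Set W} (hψ : S.InjOn ψ) {x : W → ℝ}
    (hx : ∀ a, x a = 1 ∨ x a = -1) :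
    ∃ χ : V → ℝ, (∀ i, χ i = 1 ∨ χ i = -1) ∧ ∀ a ∈ S, χ (ψ a) = x a := by
  have hinj := Set.injOn_iff_injective.mp hψ
  refine ⟨Function.extend (S.domRestrict ψ) (fun a => x a) 1, fun i => ?_,
    fun a ha => hinj.extend_apply _ _ ⟨a, ha⟩⟩
  by_cases h : ∃ a, S.domRestrict ψ a = i
  · obtain ⟨a, rfl⟩ := h
    rw [hinj.extend_apply]
    exact hx a
  · rw [Function.extend_apply' _ _ _ h]
    exact Or.inl rfl

end Signs

section EdgeSum

variable {V : Type*} [Fintype V] [LinearOrder V]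

noncomputable def edgeSumₗ (G : SimpleGraph V) (w : V → V → ℝ) : (V → V → ℝ) →ₗ[ℝ] ℝ where
  toFun := edgeSum G w
  map_add' x y := by
    simp only [edgeSum, Pi.add_apply, mul_add, ← sum_add_distrib, ite_add_ite, add_zero]
  map_smul' c x := by
    simp only [edgeSum, Pi.smul_apply, smul_eq_mul, RingHom.id_apply, mul_sum, mul_ite,
      mul_zero, mul_left_comm]

theorem edgeSumₗ_apply (G : SimpleGraph V) (w x : V → V → ℝ) :
    edgeSumₗ G w x = edgeSum G w x := rfl

theorem edgeSum_zero (G : SimpleGraph V) (w : V → V → ℝ) : edgeSum G w 0 = 0 :=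
  map_zero (edgeSumₗ G w)

theorem edgeSum_smul (G : SimpleGraph V) (w : V → V → ℝ) (c : ℝ) (x : V → V → ℝ) :
    edgeSum G w (c • x) = c * edgeSum G w x :=
  map_smul (edgeSumₗ G w) c x

theorem edgeSum_sum (G : SimpleGraph V) (w : V → V → ℝ) {ι : Type*} (s : Finset ι)
    (x : ι → V → V → ℝ) :
    edgeSum G w (fun i j => ∑ t ∈ s, x t i j) = ∑ t ∈ s, edgeSum G w (x t) := by
  simp only [← edgeSumₗ_apply, ← map_sum, Finset.sum_fn]

theorem edgeSum_congr (G : SimpleGraph V) (w : V → V → ℝ) {x y : V → V → ℝ}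
    (h : ∀ i j, i < j → G.Adj i j → x i j = y i j) : edgeSum G w x = edgeSum G w y :=
  sum_congr rfl fun i _ => sum_congr rfl fun j _ => by
    split_ifs with hij
    · rw [h i j hij.1 hij.2]
    · rfl

theorem edgeSum_projE (G : SimpleGraph V) (w : V → V → ℝ) (X : Matrix V V ℝ) :
    edgeSum G w (projE G X) = edgeSum G w X :=
  edgeSum_congr G w fun _ _ _ hadj => if_pos hadj

theorem edgeSum_top (w : V → V → ℝ) (X : Matrix V V ℝ) : edgeSum ⊤ w X = edgeSumAll w X :=
  sum_congr rfl fun _ _ => sum_congr rfl fun _ _ => by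
    simp only [SimpleGraph.top_adj]
    exact if_congr (and_iff_left_of_imp ne_of_lt) rfl rfl

theorem edgeSum_single (G : SimpleGraph V) (w : V → V → ℝ) {a b : V} (hab : a < b)
    (hadj : G.Adj a b) (c : ℝ) :
    edgeSum G w (fun i j => if i = a ∧ j = b then c else 0) = w a b * c := by
  rw [edgeSum, sum_eq_single a, sum_eq_single b]
  · simp [hab, hadj]
  all_goals simp +contextual

theorem edgeSum_le_sum_abs (G : SimpleGraph V) (w : V → V → ℝ) {x : V → V → ℝ}
    (hx : ∀ i j, |x i j| ≤ 1) : edgeSum G w x ≤ ∑ i, ∑ j, |w i j| :=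
  sum_le_sum fun i _ => sum_le_sum fun j _ => by
    split_ifs
    · calc w i j * x i j ≤ |w i j| * |x i j| := (le_abs_self _).trans (abs_mul _ _).le
        _ ≤ |w i j| := mul_le_of_le_one_right (abs_nonneg _) (hx i j)
    · exact abs_nonneg _

end EdgeSum

section Values

variable {V : Type*} [Fintype V] [LinearOrder V] (G : SimpleGraph V) (w : V → V → ℝ)

theorem le_ipVal {x : V → ℝ} (hx : ∀ i, x i = 1 ∨ x i = -1) :
    edgeSum G w (fun i j => x i * x j) ≤ ipVal G w := by
  refine le_csSup ⟨∑ i, ∑ j, |w i j|, ?_⟩ ⟨x, hx, rfl⟩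
  rintro _ ⟨y, hy, rfl⟩
  exact edgeSum_le_sum_abs G w fun i j => by
    rcases hy i with h | h <;> rcases hy j with h' | h' <;> simp [h, h']

theorem ipVal_le {c : ℝ} (h : ∀ x : V → ℝ, (∀ i, x i = 1 ∨ x i = -1) →
    edgeSum G w (fun i j => x i * x j) ≤ c) : ipVal G w ≤ c :=
  csSup_le ⟨_, 1, fun _ => Or.inl rfl, rfl⟩ fun _ ⟨x, hx, ht⟩ => ht ▸ h x hx

theorem le_sdpVal {u : V → EuclideanSpace ℝ V} (hu : ∀ i, ‖u i‖ = 1) :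
    edgeSum G w (fun i j => inner ℝ (u i) (u j)) ≤ sdpVal G w := by
  refine le_csSup ⟨∑ i, ∑ j, |w i j|, ?_⟩ ⟨u, hu, rfl⟩
  rintro _ ⟨v, hv, rfl⟩
  exact edgeSum_le_sum_abs G w fun i j =>
    (abs_real_inner_le_norm _ _).trans (by rw [hv, hv, one_mul])

theorem sdpVal_le {c : ℝ} (h : ∀ u : V → EuclideanSpace ℝ V, (∀ i, ‖u i‖ = 1) →
    edgeSum G w (fun i j => inner ℝ (u i) (u j)) ≤ c) : sdpVal G w ≤ c :=
  csSup_le ⟨_, fun i => EuclideanSpace.single i 1, fun _ => by simp, rfl⟩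
    fun _ ⟨u, hu, ht⟩ => ht ▸ h u hu

theorem edgeSum_sum_le_card_mul_ipVal {ι : Type*} [Fintype ι] (x : ι → V → ℝ)
    (hx : ∀ s i, x s i = 1 ∨ x s i = -1) :
    edgeSum G w (fun i j => ∑ s, x s i * x s j) ≤ Fintype.card ι * ipVal G w := by
  rw [edgeSum_sum, ← nsmul_eq_mul]
  exact sum_le_card_nsmul _ _ _ fun s _ => le_ipVal G w (hx s)

theorem ipVal_nonneg : 0 ≤ ipVal G w := by
  have h := edgeSum_sum_le_card_mul_ipVal G w toSign toSign_eq_one_or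
  have h0 (i j : V) (hij : i < j) : ∑ s, toSign s i * toSign s j = 0 := by
    rw [sum_toSign_mul_toSign, if_neg hij.ne]
  rw [edgeSum_congr G w (y := 0) fun i j hij _ => h0 i j hij, edgeSum_zero] at h
  exact nonneg_of_mul_nonneg_right h (by positivity)

theorem abs_le_ipVal {a b : V} (hab : a < b) (hadj : G.Adj a b) : |w a b| ≤ ipVal G w := by
  obtain ⟨σ, hσ, hσw⟩ : ∃ σ : ℝ, (σ = 1 ∨ σ = -1) ∧ w a b * σ = |w a b| := by
    rcases le_or_gt 0 (w a b) with h | h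
    · exact ⟨1, Or.inl rfl, by rw [abs_of_nonneg h, mul_one]⟩
    · exact ⟨-1, Or.inr rfl, by rw [abs_of_neg h, mul_neg_one]⟩
  -- independent random signs, except that the sign at `a` is `σ` times the sign at `b`
  let x (s : V → Bool) (i : V) : ℝ :=
    (if i = a then σ else 1) * toSign s (if i = a then b else i)
  have hx (s : V → Bool) (i : V) : x s i = 1 ∨ x s i = -1 := by
    by_cases hi : i = a <;>
      rcases toSign_eq_one_or s (if i = a then b else i) with h | h <;>
      rcases hσ with hσ | hσ <;> simp_all [x]
  have hsum (i j : V) (hij : i < j) : ∑ s, x s i * x s j =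
      if i = a ∧ j = b then (Fintype.card (V → Bool) : ℝ) * σ else 0 := by
    simp only [x, mul_mul_mul_comm _ (toSign _ _), ← mul_sum, sum_toSign_mul_toSign]
    by_cases hi : i = a
    · subst hi
      by_cases hjb : j = b
      · subst hjb
        simp [hij.ne', mul_comm]
      · simp [hij.ne', hjb, Ne.symm hjb]
    · by_cases hj : j = a
      · subst hj
        simp [hi, (hij.trans hab).ne]
      · simp [hi, hj, hij.ne]
  have h := edgeSum_sum_le_card_mul_ipVal G w x hx
  rw [edgeSum_congr G w fun i j hij _ => hsum i j hij, edgeSum_single G w hab hadj,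
    mul_left_comm, hσw] at h
  exact le_of_mul_le_mul_left h (by positivity)

theorem edgeSum_le_ipVal_of_mem_cutPolytope {C : Matrix V V ℝ} (hC : C ∈ cutPolytope V) :
    edgeSum G w C ≤ ipVal G w := by
  refine convexHull_min ?_ (convex_halfSpace_le (edgeSumₗ G w).isLinear _) hC
  rintro _ ⟨x, hx, rfl⟩
  exact le_ipVal G w hx

end Values

section Elliptope

variable {V : Type*} [Fintype V]

theorem gram_mem_elliptope {E : Type*} [NormedAddCommGroup E] [InnerProductSpace ℝ E]
    {u : V → E} (hu : ∀ i, ‖u i‖ = 1) : Matrix.gram ℝ u ∈ elliptope V :=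
  ⟨Matrix.posSemidef_gram ℝ u, fun i => by
    rw [Matrix.gram_apply, real_inner_self_eq_norm_sq, hu, one_pow]⟩

theorem exists_gram_eq_of_mem_elliptope {X : Matrix V V ℝ} (hX : X ∈ elliptope V) :
    ∃ u : V → EuclideanSpace ℝ V, (∀ i, ‖u i‖ = 1) ∧ Matrix.gram ℝ u = X := by
  open scoped MatrixOrder in
  obtain ⟨B, rfl⟩ := CStarAlgebra.nonneg_iff_eq_star_mul_self.mp hX.1.nonneg
  let u (i : V) : EuclideanSpace ℝ V := WithLp.toLp 2 fun l => B l i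
  have hgram : Matrix.gram ℝ u = star B * B := by
    ext i j
    simp [u, Matrix.gram_apply, EuclideanSpace.inner_toLp_toLp, Matrix.mul_apply, dotProduct,
      mul_comm]
  refine ⟨u, fun i => ?_, hgram⟩
  have h := hX.2 i
  rw [← hgram, Matrix.gram_apply, real_inner_self_eq_norm_sq] at h
  exact (pow_eq_one_iff_of_nonneg (norm_nonneg _) two_ne_zero).mp h

theorem submatrix_mem_elliptope {W : Type*} [Fintype W] {X : Matrix V V ℝ}
    (hX : X ∈ elliptope V) (f : W → V) : X.submatrix f f ∈ elliptope W :=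
  ⟨hX.1.submatrix f, fun a => hX.2 (f a)⟩

theorem edgeSum_le_sdpVal_of_mem_elliptope [LinearOrder V] (G : SimpleGraph V)
    (w : V → V → ℝ) {X : Matrix V V ℝ} (hX : X ∈ elliptope V) : edgeSum G w X ≤ sdpVal G w := by
  obtain ⟨u, hu, rfl⟩ := exists_gram_eq_of_mem_elliptope hX
  exact le_sdpVal G w hu

end Elliptope

section Kappa

variable {V : Type*} [Fintype V] [LinearOrder V] (G : SimpleGraph V)

theorem sdpVal_nonneg (w : V → V → ℝ) : 0 ≤ sdpVal G w := by
  have h := le_sdpVal G w (u := fun i => EuclideanSpace.single i 1) fun _ => by simp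
  rwa [edgeSum_congr G w (y := 0) fun i j hij _ => by
    simp [EuclideanSpace.inner_single_left, hij.ne'], edgeSum_zero] at h

theorem sdpVal_le_card_sq_mul_ipVal (w : V → V → ℝ) :
    sdpVal G w ≤ Fintype.card V ^ 2 * ipVal G w := by
  refine sdpVal_le G w fun u hu => ?_
  calc edgeSum G w (fun i j => inner ℝ (u i) (u j)) ≤ ∑ _i : V, ∑ _j : V, ipVal G w :=
        sum_le_sum fun i _ => sum_le_sum fun j _ => by
          split_ifs with h
          · calc w i j * inner ℝ (u i) (u j) ≤ |w i j| * |inner ℝ (u i) (u j)| :=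
                  (le_abs_self _).trans (abs_mul _ _).le
              _ ≤ |w i j| * 1 := by
                  gcongr; exact (abs_real_inner_le_norm _ _).trans (by rw [hu, hu, one_mul])
              _ ≤ ipVal G w := by rw [mul_one]; exact abs_le_ipVal G w h.1 h.2
          · exact ipVal_nonneg G w
    _ = Fintype.card V ^ 2 * ipVal G w := by simp [sq, mul_assoc]

theorem le_kappaVal (w : V → V → ℝ) : sdpVal G w / ipVal G w ≤ kappaVal G := by
  refine le_csSup ⟨Fintype.card V ^ 2, ?_⟩ ⟨w, rfl⟩
  rintro _ ⟨v, rfl⟩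
  exact div_le_of_le_mul₀ (ipVal_nonneg G v) (by positivity) (sdpVal_le_card_sq_mul_ipVal G v)

theorem kappaVal_nonneg : 0 ≤ kappaVal G :=
  Real.sSup_nonneg fun _ ⟨w, ht⟩ => ht ▸ div_nonneg (sdpVal_nonneg G w) (ipVal_nonneg G w)

theorem sdpVal_le_kappaVal_mul_ipVal (w : V → V → ℝ) : sdpVal G w ≤ kappaVal G * ipVal G w := by
  rcases (ipVal_nonneg G w).eq_or_lt with h | h
  · simpa [← h] using sdpVal_le_card_sq_mul_ipVal G w
  · exact (div_le_iff₀ h).mp (le_kappaVal G w)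

theorem kappaVal_le {c : ℝ} (hc : 0 ≤ c) (h : ∀ w, sdpVal G w ≤ c * ipVal G w) :
    kappaVal G ≤ c :=
  Real.sSup_le (fun _ ⟨w, ht⟩ => ht ▸ div_le_of_le_mul₀ (ipVal_nonneg G w) hc (h w)) hc

end Kappa

section Restriction

variable {V : Type*} [Fintype V] [LinearOrder V]

theorem edgeSumAll_smul (w : V → V → ℝ) (c : ℝ) (X : Matrix V V ℝ) :
    edgeSumAll w (c • X) = c * edgeSumAll w X := by
  rw [← edgeSum_top, ← edgeSum_top]
  exact edgeSum_smul ⊤ w c X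

theorem edgeSumAll_eq_of_strictMonoOn {W : Type*} [Fintype W] [LinearOrder W] {ψ : W → V}
    {S : Set W} (hψ : StrictMonoOn ψ S) {w : V → V → ℝ} (hw : suppSet w ⊆ ψ '' S)
    {M : Matrix V V ℝ} {N : Matrix W W ℝ} (hMN : ∀ a ∈ S, ∀ b ∈ S, N a b = M (ψ a) (ψ b)) :
    edgeSumAll (fun a b => if a ∈ S ∧ b ∈ S then w (ψ a) (ψ b) else 0) N = edgeSumAll w M := by
  simp only [edgeSumAll, ← Fintype.sum_prod_type']
  have hS {a b : W} (h : (if a < b then (if a ∈ S ∧ b ∈ S then w (ψ a) (ψ b) else 0) * N a b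
      else 0) ≠ 0) : a < b ∧ a ∈ S ∧ b ∈ S := by
    split_ifs at h with h1 h2 <;> simp_all
  refine sum_bij_ne_zero (fun p _ _ => (ψ p.1, ψ p.2)) (fun _ _ _ => mem_univ _) ?_ ?_ ?_
  · rintro ⟨a, b⟩ - h ⟨a', b'⟩ - h' heq
    obtain ⟨-, ha, hb⟩ := hS h
    obtain ⟨-, ha', hb'⟩ := hS h'
    simp only [Prod.mk.injEq] at heq ⊢
    exact ⟨hψ.injOn ha ha' heq.1, hψ.injOn hb hb' heq.2⟩
  · rintro ⟨i, j⟩ - h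
    obtain ⟨hij, hwM⟩ : i < j ∧ w i j * M i j ≠ 0 := by
      by_cases hij : i < j
      · exact ⟨hij, by simpa [hij] using h⟩
      · simp [hij] at h
    have hw0 : w i j ≠ 0 := left_ne_zero_of_mul hwM
    obtain ⟨a, ha, rfl⟩ := hw ⟨j, Or.inl ⟨hij, hw0⟩⟩
    obtain ⟨b, hb, rfl⟩ := hw ⟨ψ a, Or.inr ⟨hij, hw0⟩⟩
    refine ⟨(a, b), mem_univ _, ?_, rfl⟩
    rwa [if_pos ((hψ.lt_iff_lt ha hb).mp hij), if_pos ⟨ha, hb⟩, hMN a ha b hb]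
  · rintro ⟨a, b⟩ - h
    obtain ⟨hab, ha, hb⟩ := hS h
    dsimp only at hab ha hb ⊢
    rw [if_pos hab, if_pos ⟨ha, hb⟩, if_pos (hψ ha hb hab), hMN a ha b hb]

theorem exists_strictMonoOn_image_eq [Nonempty V] {k : ℕ} {s : Set V} (hs : s.ncard ≤ k) :
    ∃ (ψ : Fin k → V) (S : Set (Fin k)), StrictMonoOn ψ S ∧ ψ '' S = s := by
  have hcard : s.toFinset.card ≤ k := by rwa [← Set.ncard_eq_toFinset_card']
  let e := s.toFinset.orderEmbOfFin rfl
  have he : Function.extend (Fin.castLE hcard) e (fun _ => Classical.arbitrary V) ∘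
      Fin.castLE hcard = e :=
    funext fun a => (Fin.castLE_injective hcard).extend_apply e _ a
  refine ⟨Function.extend (Fin.castLE hcard) e fun _ => Classical.arbitrary V,
    Set.range (Fin.castLE hcard), ?_, ?_⟩
  · rintro _ ⟨a, rfl⟩ _ ⟨b, rfl⟩ hab
    simp only [← Function.comp_apply (f := Function.extend _ _ _), he]
    exact e.strictMono hab
  · rw [← Set.range_comp, he, range_orderEmbOfFin, Set.coe_toFinset]

theorem edgeSumAll_le_kappaVal_top {k : ℕ} {w : V → V → ℝ} (hw : ValidIneq w)
    (hsupp : (suppSet w).ncard ≤ k) {X : Matrix V V ℝ} (hX : X ∈ elliptope V) :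
    edgeSumAll w X ≤ kappaVal (⊤ : SimpleGraph (Fin k)) := by
  cases isEmpty_or_nonempty V
  · simpa [edgeSumAll] using kappaVal_nonneg _
  obtain ⟨ψ, S, hψ, hS⟩ := exists_strictMonoOn_image_eq hsupp
  let w' : Fin k → Fin k → ℝ := fun a b => if a ∈ S ∧ b ∈ S then w (ψ a) (ψ b) else 0
  -- every sign vector on `Fin k` extends to one on `V`, so validity of `w` bounds `ip(K_k, w')`
  have hip : ipVal ⊤ w' ≤ 1 := ipVal_le _ _ fun x hx => by
    obtain ⟨χ, hχ, hχx⟩ := exists_sign_extend hψ.injOn hx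
    have hMN : ∀ a ∈ S, ∀ b ∈ S, x a * x b = χ (ψ a) * χ (ψ b) := fun a ha b hb => by
      rw [hχx a ha, hχx b hb]
    exact (edgeSum_top w' _).trans_le <| (edgeSumAll_eq_of_strictMonoOn hψ hS.ge
      (M := Matrix.of fun i j => χ i * χ j) hMN).trans_le <|
        hw _ (subset_convexHull ℝ _ ⟨χ, hχ, rfl⟩)
  calc edgeSumAll w X = edgeSum ⊤ w' (X.submatrix ψ ψ) :=
        ((edgeSum_top _ _).trans (edgeSumAll_eq_of_strictMonoOn hψ hS.ge fun _ _ _ _ => rfl)).symm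
    _ ≤ sdpVal ⊤ w' := edgeSum_le_sdpVal_of_mem_elliptope _ _ (submatrix_mem_elliptope hX ψ)
    _ ≤ kappaVal ⊤ * ipVal ⊤ w' := sdpVal_le_kappaVal_mul_ipVal _ _
    _ ≤ kappaVal ⊤ := mul_le_of_le_one_right (kappaVal_nonneg _) hip

theorem inv_smul_mem_Rk {k : ℕ} {X : Matrix V V ℝ} (hX : X ∈ elliptope V) {t : ℝ}
    (ht : kappaVal (⊤ : SimpleGraph (Fin k)) < t) : t⁻¹ • X ∈ Rk V k := fun w hw hsupp => by
  have ht0 : 0 < t := (kappaVal_nonneg _).trans_lt ht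
  rw [edgeSumAll_smul, inv_mul_le_iff₀ ht0, mul_one]
  exact (edgeSumAll_le_kappaVal_top hw hsupp hX).trans ht.le

theorem edgeSum_le_mul_ipVal_of_inGk {k : ℕ} {G : SimpleGraph V} (hG : inGk k G)
    (w : V → V → ℝ) {X : Matrix V V ℝ} {t : ℝ} (ht : 0 < t) (hX : t⁻¹ • X ∈ Rk V k) :
    edgeSum G w X ≤ t * ipVal G w := by
  obtain ⟨C, hC, hCX⟩ : projE G (t⁻¹ • X) ∈ cutG G := hG ▸ Set.mem_image_of_mem _ hX
  calc edgeSum G w X = t * (t⁻¹ * edgeSum G w X) := by rw [mul_inv_cancel_left₀ ht.ne']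
    _ = t * edgeSum G w (t⁻¹ • X) := congrArg (t * ·) (edgeSum_smul G w t⁻¹ X).symm
    _ = t * edgeSum G w C := by rw [← edgeSum_projE, ← hCX, edgeSum_projE]
    _ ≤ t * ipVal G w := by gcongr; exact edgeSum_le_ipVal_of_mem_cutPolytope G w hC

end Restriction

/-- if `G ∈ 𝒢_k` then `κ(G) ≤ κ(K_k)`. -/
theorem kappa_le_kappa_complete_of_inGk {n : ℕ} (k : ℕ)
    (G : SimpleGraph (Fin n)) (hG : inGk k G) :
    kappaVal G ≤ kappaVal (⊤ : SimpleGraph (Fin k)) := by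
  refine le_of_forall_gt_imp_ge_of_dense fun t ht => ?_
  have ht0 : 0 < t := (kappaVal_nonneg _).trans_lt ht
  refine kappaVal_le G ht0.le fun w => sdpVal_le G w fun u hu => ?_
  exact edgeSum_le_mul_ipVal_of_inGk hG w ht0 (inv_smul_mem_Rk (gram_mem_elliptope hu) ht)
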